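/- Let n ≥ 1 be an integer, and for a ≠ 0, b ∈ ℝ, define u_n(a,b,y) = |a|^{−1/2}·Ψ_n((y−b)/a), where Ψ_n is the Poisson wavelet. Define the differential operator D^{(n)}_{a,b} acting on smooth functions F(a,b) by D^{(n)}_{a,b}F = Σ_{k=1}^{n+1} binom(n+1, k)·(−1)^{k+1}·a^k·( a·∂^k F/(∂a ∂b^{k−1}) + ((2k−1)/2)·∂^{k−1}F/∂b^{k−1} ) + b·F. Then for all a ≠ 0, b ∈ ℝ and y ∈ ℝ with (y−b)/a > 0: D^{(n)}_{a,b} u_n(a,b,y) = y·u_n(a,b,y), the derivatives being taken with respect to the variables (a,b) at fixed y. -/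

import Mathlib

/-!
On `t ≥ 0` the Poisson wavelet is `G(t) = P(t) e^{-t}` with `P` a polynomial of degree `n`, and
near `(a, b)` the kernel agrees with `|a|^{-1/2} G((y - b)/a)`, so it may be replaced by this
smooth kernel. For any smooth `g` and `u = |a|^{-1/2} g((y - b)/a)` one has
`∂_b^j u = (-1/a)^j |a|^{-1/2} g^{(j)}`, and the `k`-th summand of `D^{(n)}` collapses to
`-C(n+1,k) (y - b) |a|^{-1/2} g^{(k)}`. Hence
`D^{(n)} u = y u - (y - b) |a|^{-1/2} ((1 + d/dt)^{n+1} g)((y - b)/a)`, and the last term vanishes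
for `g = G`: since `d/dt (Q e^{-t}) = (Q' - Q) e^{-t}`, we get
`(1 + d/dt)^{n+1} (P e^{-t}) = P^{(n+1)} e^{-t} = 0`.
-/

/-- The Poisson wavelet `Ψ_n(y) = ((y-n)/n!)·y^{n-1}·e^{-y}` for `y ≥ 0`, `0` for `y < 0`. -/
noncomputable def poissonWavelet (n : ℕ) (y : ℝ) : ℝ :=
  if 0 ≤ y then (y - n) / (Nat.factorial n) * y ^ (n - 1) * Real.exp (-y) else 0

/-- The kernel of the Poisson wavelet transform, `u_n(a,b,y) = |a|^{-1/2} Ψ_n((y-b)/a)`. -/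
noncomputable def poissonKernel' (n : ℕ) (a b y : ℝ) : ℝ :=
  (Real.sqrt |a|)⁻¹ * poissonWavelet n ((y - b) / a)

/-- The differential operator
`D^{(n)}_{a,b}F = ∑_{k=1}^{n+1} C(n+1,k)(-1)^{k+1} a^k (a·∂^kF/(∂a∂b^{k-1})
  + ((2k-1)/2)·∂^{k-1}F/∂b^{k-1}) + b·F`. -/
noncomputable def poissonOp (n : ℕ) (F : ℝ → ℝ → ℝ) (a b : ℝ) : ℝ :=
  (∑ k ∈ Finset.Icc 1 (n + 1), ((n + 1).choose k : ℝ) * (-1 : ℝ) ^ (k + 1) * a ^ k *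
    (a * deriv (fun a' => deriv^[k - 1] (fun b' => F a' b') b) a +
      (2 * (k : ℝ) - 1) / 2 * deriv^[k - 1] (fun b' => F a b') b)) + b * F a b

open Polynomial Topology
open scoped ContDiff

lemma hasDerivAt_eval_mul_exp_neg (p : ℝ[X]) (t : ℝ) :
    HasDerivAt (fun t => p.eval t * Real.exp (-t))
      ((derivative p - p).eval t * Real.exp (-t)) t := by
  refine ((p.hasDerivAt t).mul (hasDerivAt_neg t).exp).congr_deriv ?_
  simp only [eval_sub]
  ring

lemma iteratedDeriv_eval_mul_exp_neg (p : ℝ[X]) (k : ℕ) :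
    iteratedDeriv k (fun t => p.eval t * Real.exp (-t)) =
      fun t => (((derivative - 1 : Module.End ℝ ℝ[X]) ^ k) p).eval t * Real.exp (-t) := by
  induction k with
  | zero => simp
  | succ k ih =>
    funext t
    rw [iteratedDeriv_succ, ih, (hasDerivAt_eval_mul_exp_neg _ t).deriv, pow_succ',
      Module.End.mul_apply]
    rfl

lemma sum_choose_mul_iteratedDeriv_eval_mul_exp_neg (p : ℝ[X]) (m : ℕ) (t : ℝ) :
    ∑ k ∈ Finset.range (m + 1),
        (m.choose k : ℝ) * iteratedDeriv k (fun t => p.eval t * Real.exp (-t)) t =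
      (derivative^[m] p).eval t * Real.exp (-t) := by
  have hbinom : (derivative : Module.End ℝ ℝ[X]) ^ m = ∑ k ∈ Finset.range (m + 1),
      (derivative - 1) ^ k * 1 ^ (m - k) * (m.choose k : Module.End ℝ ℝ[X]) := by
    rw [← (Commute.one_right _).add_pow, sub_add_cancel]
  rw [← Module.End.pow_apply, hbinom, LinearMap.sum_apply, eval_finsetSum, Finset.sum_mul]
  refine Finset.sum_congr rfl fun k _ => ?_
  rw [one_pow, mul_one, Module.End.mul_apply, Module.End.natCast_apply, map_nsmul, eval_smul,
    nsmul_eq_mul, iteratedDeriv_eval_mul_exp_neg, mul_assoc]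

noncomputable def waveletKernel (g : ℝ → ℝ) (a b y : ℝ) : ℝ :=
  (Real.sqrt |a|)⁻¹ * g ((y - b) / a)

section WaveletKernel

variable {g : ℝ → ℝ} {a b y : ℝ}

lemma iteratedDeriv_waveletKernel_right (hg : ContDiff ℝ ∞ g) (j : ℕ) :
    iteratedDeriv j (fun b' => waveletKernel g a b' y) b =
      (-a⁻¹) ^ j * waveletKernel (iteratedDeriv j g) a b y := by
  set h : ℝ → ℝ := fun s => g (a⁻¹ * s) with hh
  have hcomp : (fun b' => waveletKernel g a b' y) = fun b' => (Real.sqrt |a|)⁻¹ * h (y - b') := by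
    funext b'
    simp only [hh, waveletKernel, div_eq_inv_mul]
  rw [hcomp, iteratedDeriv_const_mul_field, iteratedDeriv_comp_const_sub, hh,
    iteratedDeriv_comp_const_mul (contDiff_infty.mp hg j)]
  simp only [waveletKernel, smul_eq_mul, div_eq_inv_mul]
  ring

lemma hasDerivAt_neg_inv_pow (ha : a ≠ 0) (j : ℕ) :
    HasDerivAt (fun a' : ℝ => (-a'⁻¹) ^ j) (-j * (-a⁻¹) ^ j / a) a := by
  cases j with
  | zero => simpa using hasDerivAt_const a (1 : ℝ)
  | succ m =>
    refine ((hasDerivAt_inv ha).fun_neg.pow (m + 1)).congr_deriv ?_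
    simp only [Nat.add_sub_cancel, pow_succ]
    field_simp

lemma hasDerivAt_inv_sqrt_abs (ha : a ≠ 0) :
    HasDerivAt (fun a' : ℝ => (Real.sqrt |a'|)⁻¹) (-(Real.sqrt |a|)⁻¹ / (2 * a)) a := by
  have hs : Real.sqrt |a| ≠ 0 := by positivity
  refine (((hasDerivAt_abs ha).sqrt (abs_ne_zero.2 ha)).inv hs).congr_deriv ?_
  rw [sq, Real.mul_self_sqrt (abs_nonneg a)]
  rcases ha.lt_or_gt with h | h
  · simp only [sign_neg h, SignType.coe_neg_one, abs_of_neg h] at hs ⊢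
    field_simp
  · simp only [sign_pos h, SignType.coe_one, abs_of_pos h] at hs ⊢
    field_simp

lemma hasDerivAt_waveletKernel_left (hg : Differentiable ℝ g) (ha : a ≠ 0) :
    HasDerivAt (fun a' => waveletKernel g a' b y)
      ((-(1 / 2) * waveletKernel g a b y - (y - b) / a * waveletKernel (deriv g) a b y) / a) a := by
  have ht : HasDerivAt (fun a' : ℝ => (y - b) / a') (-((y - b) / a) / a) a := by
    refine ((hasDerivAt_inv ha).const_mul (y - b)).congr_deriv ?_
    field_simp
  refine ((hasDerivAt_inv_sqrt_abs ha).mul ((hg _).hasDerivAt.comp a ht)).congr_deriv ?_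
  simp only [waveletKernel, Function.comp_apply]
  field_simp
  ring

lemma hasDerivAt_iteratedDeriv_waveletKernel (hg : ContDiff ℝ ∞ g) (ha : a ≠ 0) (j : ℕ) :
    HasDerivAt (fun a' => iteratedDeriv j (fun b' => waveletKernel g a' b' y) b)
      ((-a⁻¹) ^ j * (-(j + 1 / 2) * waveletKernel (iteratedDeriv j g) a b y
        - (y - b) / a * waveletKernel (iteratedDeriv (j + 1) g) a b y) / a) a := by
  simp only [iteratedDeriv_waveletKernel_right hg]
  have hdiff : Differentiable ℝ (iteratedDeriv j g) :=
    hg.differentiable_iteratedDeriv j (by exact_mod_cast WithTop.coe_lt_top _)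
  refine ((hasDerivAt_neg_inv_pow ha j).mul (hasDerivAt_waveletKernel_left hdiff ha)).congr_deriv ?_
  rw [iteratedDeriv_succ]
  ring

lemma poissonOp_waveletKernel (n : ℕ) (hg : ContDiff ℝ ∞ g) (ha : a ≠ 0) :
    poissonOp n (fun a' b' => waveletKernel g a' b' y) a b =
      y * waveletKernel g a b y - (y - b) * waveletKernel
        (fun t => ∑ k ∈ Finset.range (n + 2), ((n + 1).choose k : ℝ) * iteratedDeriv k g t)
        a b y := by
  -- The `(2k - 1)/2` term cancels the `a`-derivative of the prefactor `(-1/a)^{k-1} |a|^{-1/2}`.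
  have hterm : ∀ k ∈ Finset.Icc 1 (n + 1),
      ((n + 1).choose k : ℝ) * (-1 : ℝ) ^ (k + 1) * a ^ k *
        (a * deriv (fun a' => deriv^[k - 1] (fun b' => waveletKernel g a' b' y) b) a +
          (2 * (k : ℝ) - 1) / 2 * deriv^[k - 1] (fun b' => waveletKernel g a b' y) b) =
      -((y - b) * (((n + 1).choose k : ℝ) * waveletKernel (iteratedDeriv k g) a b y)) := by
    intro k hk
    obtain ⟨j, rfl⟩ : ∃ j, k = j + 1 := ⟨k - 1, by grind⟩
    have hunit : (-1 : ℝ) ^ j * a ^ j * (-a⁻¹) ^ j = 1 := by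
      rw [← mul_pow, ← mul_pow]
      field_simp
      simp
    have hab : a * ((y - b) / a) = y - b := mul_div_cancel₀ _ ha
    simp only [Nat.add_sub_cancel, ← iteratedDeriv_eq_iterate]
    rw [(hasDerivAt_iteratedDeriv_waveletKernel hg ha j).deriv,
      iteratedDeriv_waveletKernel_right hg, mul_div_cancel₀ _ ha]
    push_cast
    linear_combination (-((n + 1).choose (j + 1) : ℝ) *
      waveletKernel (iteratedDeriv (j + 1) g) a b y) * (a * ((y - b) / a) * hunit + hab)
  have hsplit : waveletKernel
      (fun t => ∑ k ∈ Finset.range (n + 2), ((n + 1).choose k : ℝ) * iteratedDeriv k g t) a b y =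
      waveletKernel g a b y + ∑ k ∈ Finset.Icc 1 (n + 1),
        ((n + 1).choose k : ℝ) * waveletKernel (iteratedDeriv k g) a b y := by
    simp only [waveletKernel, Finset.mul_sum]
    rw [show Finset.range (n + 2) = Finset.Ico 0 (n + 1 + 1) by rw [Finset.range_eq_Ico],
      Finset.sum_eq_sum_Ico_succ_bot (by omega), zero_add, Finset.Ico_add_one_right_eq_Icc]
    simp only [Nat.choose_zero_right, Nat.cast_one, one_mul, iteratedDeriv_zero, mul_left_comm]
  rw [poissonOp, Finset.sum_congr rfl hterm, Finset.sum_neg_distrib, ← Finset.mul_sum, hsplit]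
  ring

end WaveletKernel

noncomputable def poissonPolynomial (n : ℕ) : ℝ[X] :=
  C (n.factorial : ℝ)⁻¹ * (X - C (n : ℝ)) * X ^ (n - 1)

lemma natDegree_poissonPolynomial_le {n : ℕ} (hn : 1 ≤ n) :
    (poissonPolynomial n).natDegree ≤ n := by
  unfold poissonPolynomial
  compute_degree
  omega

lemma poissonWavelet_eq_eval_mul_exp_neg (n : ℕ) {t : ℝ} (ht : 0 ≤ t) :
    poissonWavelet n t = (poissonPolynomial n).eval t * Real.exp (-t) := by
  rw [poissonWavelet, if_pos ht]
  simp only [poissonPolynomial, eval_mul, eval_C, eval_sub, eval_X, eval_pow]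
  ring

lemma sum_choose_mul_iteratedDeriv_poissonPolynomial_eq_zero {n : ℕ} (hn : 1 ≤ n) :
    (fun t => ∑ k ∈ Finset.range (n + 2), ((n + 1).choose k : ℝ) *
      iteratedDeriv k (fun t => (poissonPolynomial n).eval t * Real.exp (-t)) t) = 0 := by
  funext t
  rw [sum_choose_mul_iteratedDeriv_eval_mul_exp_neg,
    iterate_derivative_eq_zero (Nat.lt_succ_of_le (natDegree_poissonPolynomial_le hn))]
  simp

lemma poissonOp_congr_of_eventuallyEq {n : ℕ} {F F' : ℝ → ℝ → ℝ} {a b : ℝ}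
    (h : ∀ᶠ p in 𝓝 (a, b), F p.1 p.2 = F' p.1 p.2) :
    poissonOp n F a b = poissonOp n F' a b := by
  have hF : ∀ᶠ a' in 𝓝 a, F a' =ᶠ[𝓝 b] F' a' := h.curry_nhds
  have hiter (j : ℕ) : (fun a' => deriv^[j] (F a') b) =ᶠ[𝓝 a] fun a' => deriv^[j] (F' a') b :=
    hF.mono fun a' ha' => by simpa only [iteratedDeriv_eq_iterate] using ha'.iteratedDeriv_eq j
  simp only [poissonOp, h.self_of_nhds]
  refine congrArg (· + _) (Finset.sum_congr rfl fun k _ => ?_)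
  have hval : deriv^[k - 1] (F a) b = deriv^[k - 1] (F' a) b := (hiter (k - 1)).self_of_nhds
  rw [(hiter (k - 1)).deriv_eq, hval]

lemma poissonKernel'_eventuallyEq_waveletKernel (n : ℕ) {a b y : ℝ} (ha : a ≠ 0)
    (hy : 0 < (y - b) / a) :
    ∀ᶠ p in 𝓝 (a, b), poissonKernel' n p.1 p.2 y =
      waveletKernel (fun t => (poissonPolynomial n).eval t * Real.exp (-t)) p.1 p.2 y := by
  have hcont : ContinuousAt (fun p : ℝ × ℝ => (y - p.2) / p.1) (a, b) :=
    (continuousAt_const.sub continuousAt_snd).div continuousAt_fst ha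
  filter_upwards [hcont.eventually (lt_mem_nhds hy)] with p hp
  rw [poissonKernel', waveletKernel, poissonWavelet_eq_eval_mul_exp_neg n hp.le]

/-- The wavelet-transform kernel `u_n` is an eigenfunction of
`D^{(n)}_{a,b}`: `D^{(n)}_{a,b} u_n(a,b,y) = y·u_n(a,b,y)` whenever `(y-b)/a > 0`. -/
theorem statement_17 (n : ℕ) (hn : 1 ≤ n) (a b y : ℝ) (ha : a ≠ 0)
    (hy : 0 < (y - b) / a) :
    poissonOp n (fun a' b' => poissonKernel' n a' b' y) a b =
      y * poissonKernel' n a b y := by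
  set G : ℝ → ℝ := fun t => (poissonPolynomial n).eval t * Real.exp (-t)
  have hG : ContDiff ℝ ∞ G := by
    simpa using ((poissonPolynomial n).contDiff_aeval ∞).mul (Real.contDiff_exp.comp contDiff_neg)
  have hloc := poissonKernel'_eventuallyEq_waveletKernel n ha hy
  calc poissonOp n (fun a' b' => poissonKernel' n a' b' y) a b
      = poissonOp n (fun a' b' => waveletKernel G a' b' y) a b :=
        poissonOp_congr_of_eventuallyEq hloc
    _ = y * waveletKernel G a b y := by
      rw [poissonOp_waveletKernel n hG ha,
        sum_choose_mul_iteratedDeriv_poissonPolynomial_eq_zero hn]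
      simp [waveletKernel]
    _ = y * poissonKernel' n a b y := by rw [hloc.self_of_nhds]
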